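/- arXiv:1509.06023 — 2 statements merged into one kernel-verified Lean document; each statement's English description precedes it below -/
import Mathlib

section
/- For d ≥ 3 and k ≥ 1, let K_k = conv({0_d} ∪ ({1} × B_{k+1}^{d-1})) ⊆ ℝ^d. Every invertible affine map T with T(K_k) = K_k fixes every point of the axis ℝ × {0_{d-1}} ∩ K_k; more precisely, T fixes 0_d and maps {1} × ∂B_{k+1}^{d-1} to itself, hence fixes the first coordinate. -/
/-!
The extreme points of `K_k` are the apex `0` and the points of the base sphere
`S = {1} × ∂B_{k+1}^{d-1}`: this is where `k ≥ 1` enters, through the strict convexity of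
`x ↦ |x| ^ (k + 1)`. An affine symmetry `T` permutes them. If `T` moved the apex, then `T 0 ∈ S`
and `T⁻¹` would map `S \ {T 0}` into `S`, so the affine function `x ↦ (T⁻¹ x).1` would be
`1` on `S` minus one point. Because `d - 1 ≥ 2`, that point is an affine combination of the others
(through the midpoint `(1, 0)` of two antipodal points), so the function is `1` at `T 0` too,
whereas its value there is `0`. Hence `T` is linear and maps `S` onto `S`. The linear functional
`x ↦ (T x).1` equals `1` on `S`, hence is the first coordinate, and `T (1, 0)` is a centre of
symmetry of `S`, which forces `T (1, 0) = (1, 0)`.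
-/

def coneK (d k : ℕ) : Set (ℝ × EuclideanSpace ℝ (Fin (d - 1))) :=
  convexHull ℝ ({(0, 0)} ∪
    {p : ℝ × EuclideanSpace ℝ (Fin (d - 1)) | p.1 = 1 ∧ ∑ i, |p.2 i| ^ (k + 1) ≤ 1})

open Set
open scoped ENNReal

theorem strictConvexOn_abs_pow {n : ℕ} (hn : 2 ≤ n) :
    StrictConvexOn ℝ univ fun x : ℝ => |x| ^ n := by
  refine ⟨convex_univ, fun x _ y _ hxy a b ha hb hab => ?_⟩
  simp only [smul_eq_mul]
  have htri : |a * x + b * y| ≤ a * |x| + b * |y| := by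
    simpa [abs_mul, abs_of_pos ha, abs_of_pos hb] using abs_add_le (a * x) (b * y)
  have hpow : (a * |x| + b * |y|) ^ n ≤ a * |x| ^ n + b * |y| ^ n := by
    simpa using (convexOn_pow n).2 (abs_nonneg x) (abs_nonneg y) ha.le hb.le hab
  obtain hxy' | hxy' := eq_or_ne |x| |y|
  · -- `x = -y ≠ 0`, so the triangle inequality is strict
    obtain rfl : x = -y := (abs_eq_abs.1 hxy').resolve_left hxy
    have hy : y ≠ 0 := by rintro rfl; simp at hxy
    have hlt : |a * -y + b * y| < a * |-y| + b * |y| := by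
      rw [show a * -y + b * y = (b - a) * y by ring, abs_mul, abs_neg, ← add_mul]
      refine mul_lt_mul_of_pos_right ?_ (abs_pos.2 hy)
      rw [abs_lt]; constructor <;> linarith
    exact (pow_lt_pow_left₀ hlt (abs_nonneg _) (by omega)).trans_le hpow
  · refine (pow_le_pow_left₀ (abs_nonneg _) htri n).trans_lt ?_
    simpa using (strictConvexOn_pow hn).2 (abs_nonneg x) (abs_nonneg y) hxy' ha hb hab

theorem AffineEquiv.image_extremePoints {𝕜 E F : Type*} [Ring 𝕜] [PartialOrder 𝕜]
    [IsOrderedRing 𝕜] [AddCommGroup E] [Module 𝕜 E] [AddCommGroup F] [Module 𝕜 F]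
    (T : E ≃ᵃ[𝕜] F) (s : Set E) :
    T '' extremePoints 𝕜 s = extremePoints 𝕜 (T '' s) := by
  ext b
  obtain ⟨a, rfl⟩ := T.surjective b
  have : ∀ x y, T '' openSegment 𝕜 x y = openSegment 𝕜 (T x) (T y) :=
    image_openSegment _ T.toAffineMap
  simp only [mem_extremePoints, T.surjective.forall, T.injective.mem_set_image,
    T.injective.eq_iff, ← this]

variable {ι : Type*} [Fintype ι]

noncomputable def lpNorm (n : ℕ) (v : EuclideanSpace ℝ ι) : ℝ :=
  ‖WithLp.toLp (n : ℝ≥0∞) v.ofLp‖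

section LpNorm
variable {n : ℕ}

theorem lpNorm_pow (hn : n ≠ 0) (v : EuclideanSpace ℝ ι) :
    lpNorm n v ^ n = ∑ i, |v i| ^ n := by
  have hn' : (0 : ℝ) < ((n : ℝ≥0∞)).toReal := by
    rw [ENNReal.toReal_natCast]; exact Nat.cast_pos.2 (Nat.pos_of_ne_zero hn)
  rw [lpNorm, PiLp.norm_eq_sum hn']
  simp only [ENNReal.toReal_natCast, Real.norm_eq_abs, Real.rpow_natCast, one_div]
  exact Real.rpow_inv_natCast_pow (by positivity) hn

variable [Fact (1 ≤ (n : ℝ≥0∞))]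

theorem lpNorm_nonneg (v : EuclideanSpace ℝ ι) : 0 ≤ lpNorm n v := norm_nonneg _

theorem lpNorm_eq_zero {v : EuclideanSpace ℝ ι} : lpNorm n v = 0 ↔ v = 0 := by
  simp [lpNorm]

theorem lpNorm_smul (c : ℝ) (v : EuclideanSpace ℝ ι) :
    lpNorm n (c • v) = |c| * lpNorm n v := by
  simp [lpNorm, norm_smul]

theorem lpNorm_neg (v : EuclideanSpace ℝ ι) : lpNorm n (-v) = lpNorm n v := by
  simp [lpNorm]

theorem lpNorm_add_le (v w : EuclideanSpace ℝ ι) :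
    lpNorm n (v + w) ≤ lpNorm n v + lpNorm n w := by
  simpa [lpNorm] using norm_add_le _ _

theorem convexOn_lpNorm : ConvexOn ℝ univ (lpNorm n : EuclideanSpace ℝ ι → ℝ) :=
  convexOn_univ_norm.comp_linearMap
    ((WithLp.linearEquiv (n : ℝ≥0∞) ℝ (ι → ℝ)).symm.toLinearMap ∘ₗ
      (WithLp.linearEquiv 2 ℝ (ι → ℝ)).toLinearMap)

theorem lpNorm_single [DecidableEq ι] (i : ι) :
    lpNorm n (EuclideanSpace.single i (1 : ℝ)) = 1 := by
  have hn : n ≠ 0 := by rintro rfl; simpa using (Fact.out : 1 ≤ ((0 : ℕ) : ℝ≥0∞))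
  rw [← pow_left_inj₀ (lpNorm_nonneg _) zero_le_one hn, lpNorm_pow hn, one_pow]
  simp [apply_ite, zero_pow hn]

theorem sum_abs_pow_le_one_iff (hn : n ≠ 0) (v : EuclideanSpace ℝ ι) :
    ∑ i, |v i| ^ n ≤ 1 ↔ lpNorm n v ≤ 1 := by
  rw [← lpNorm_pow hn, pow_le_one_iff_of_nonneg (lpNorm_nonneg v) hn]

theorem sum_abs_pow_eq_one_iff (hn : n ≠ 0) (v : EuclideanSpace ℝ ι) :
    ∑ i, |v i| ^ n = 1 ↔ lpNorm n v = 1 := by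
  rw [← lpNorm_pow hn, pow_eq_one_iff_of_nonneg (lpNorm_nonneg v) hn]

theorem lpNorm_inv_smul_self {v : EuclideanSpace ℝ ι} (hv : v ≠ 0) :
    lpNorm n ((lpNorm n v)⁻¹ • v) = 1 := by
  rw [lpNorm_smul, abs_inv, abs_of_nonneg (lpNorm_nonneg v),
    inv_mul_cancel₀ (mt lpNorm_eq_zero.1 hv)]

theorem exists_lpNorm_eq_one_ne [Nontrivial ι] (w : EuclideanSpace ℝ ι) :
    ∃ u, lpNorm n u = 1 ∧ u ≠ w ∧ u ≠ -w := by
  classical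
  obtain ⟨i, j, hij⟩ := exists_pair_ne ι
  have hne (u : EuclideanSpace ℝ ι) (h : u i ≠ w i ∧ u i ≠ -w i) : u ≠ w ∧ u ≠ -w :=
    ⟨fun hu => h.1 (by rw [hu]), fun hu => h.2 (by rw [hu]; rfl)⟩
  by_cases hw : |w i| = 1
  · refine ⟨EuclideanSpace.single j 1, lpNorm_single j, hne _ ?_⟩
    have : w i ≠ 0 := by rintro h; simp [h] at hw
    have h0 : (EuclideanSpace.single j (1 : ℝ)) i = 0 := by simp [hij]
    rw [h0]
    exact ⟨this.symm, (neg_ne_zero.2 this).symm⟩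
  · refine ⟨EuclideanSpace.single i 1, lpNorm_single i, hne _ ?_⟩
    have h1 : (EuclideanSpace.single i (1 : ℝ)) i = 1 := by simp
    rw [h1]
    exact ⟨fun h => hw (by rw [← h, abs_one]),
      fun h => hw (by rw [← abs_neg, ← h, abs_one])⟩

theorem lpNorm_smul_add_smul_lt_one (hn : 2 ≤ n) {v w : EuclideanSpace ℝ ι}
    (hv : lpNorm n v ≤ 1) (hw : lpNorm n w ≤ 1) (hvw : v ≠ w) {a b : ℝ} (ha : 0 < a)
    (hb : 0 < b) (hab : a + b = 1) :
    lpNorm n (a • v + b • w) < 1 := by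
  have hn0 : n ≠ 0 := by omega
  obtain ⟨i, hi⟩ : ∃ i, v i ≠ w i := by
    by_contra! h; exact hvw (PiLp.ext h)
  have hsum : ∑ i, |(a • v + b • w) i| ^ n < a * ∑ i, |v i| ^ n + b * ∑ i, |w i| ^ n := by
    rw [Finset.mul_sum, Finset.mul_sum, ← Finset.sum_add_distrib]
    refine Finset.sum_lt_sum (fun j _ => ?_) ⟨i, Finset.mem_univ i, ?_⟩
    · simpa using (strictConvexOn_abs_pow hn).convexOn.2 (mem_univ (v j)) (mem_univ (w j))
        ha.le hb.le hab
    · simpa using (strictConvexOn_abs_pow hn).2 (mem_univ (v i)) (mem_univ (w i)) hi ha hb hab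
  rw [← lpNorm_pow hn0, ← lpNorm_pow hn0, ← lpNorm_pow hn0] at hsum
  have : a * lpNorm n v ^ n + b * lpNorm n w ^ n ≤ 1 := by
    have hv' := pow_le_one₀ (lpNorm_nonneg v) hv (n := n)
    have hw' := pow_le_one₀ (lpNorm_nonneg w) hw (n := n)
    nlinarith
  exact (pow_lt_one_iff_of_nonneg (lpNorm_nonneg _) hn0).1 (hsum.trans_le this)

end LpNorm

section Cone
variable {n : ℕ}

def baseBall (n : ℕ) : Set (ℝ × EuclideanSpace ℝ ι) := {p | p.1 = 1 ∧ lpNorm n p.2 ≤ 1}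

def baseSphere (n : ℕ) : Set (ℝ × EuclideanSpace ℝ ι) := {p | p.1 = 1 ∧ lpNorm n p.2 = 1}

def lpCone (n : ℕ) : Set (ℝ × EuclideanSpace ℝ ι) := convexHull ℝ (insert 0 (baseBall n))

variable [Fact (1 ≤ (n : ℝ≥0∞))]

theorem lpCone_subset_setOf :
    lpCone n ⊆ {p : ℝ × EuclideanSpace ℝ ι | p.1 ≤ 1 ∧ lpNorm n p.2 ≤ p.1} := by
  refine convexHull_min ?_ ?_
  · rintro p (rfl | ⟨hp1, hp2⟩)
    · simp [lpNorm_eq_zero.2]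
    · exact ⟨hp1.le, hp1 ▸ hp2⟩
  · refine (convex_halfSpace_le (LinearMap.fst ℝ ℝ _).isLinear 1).inter ?_
    rintro ⟨t, v⟩ hv ⟨s, w⟩ hw a b ha hb hab
    calc lpNorm n (a • v + b • w) ≤ a * lpNorm n v + b * lpNorm n w := by
          simpa using convexOn_lpNorm.2 (mem_univ v) (mem_univ w) ha hb hab
      _ ≤ a * t + b * s := by gcongr; exacts [hv, hw]

theorem zero_mem_extremePoints_lpCone :
    (0 : ℝ × EuclideanSpace ℝ ι) ∈ extremePoints ℝ (lpCone n) := by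
  refine mem_extremePoints_iff_left.2 ⟨subset_convexHull ℝ _ (mem_insert _ _), ?_⟩
  rintro x hx y hy ⟨a, b, ha, hb, -, hxy⟩
  obtain ⟨-, hx⟩ := lpCone_subset_setOf hx
  obtain ⟨-, hy⟩ := lpCone_subset_setOf hy
  have hx1 : x.1 = 0 := by
    have hfst : a * x.1 + b * y.1 = 0 := by simpa using congrArg Prod.fst hxy
    nlinarith [lpNorm_nonneg (n := n) x.2, lpNorm_nonneg (n := n) y.2]
  exact Prod.ext hx1 (lpNorm_eq_zero.1 (le_antisymm (hx1 ▸ hx) (lpNorm_nonneg _)))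

theorem baseSphere_subset_extremePoints_lpCone (hn : 2 ≤ n) :
    baseSphere n ⊆ extremePoints ℝ (lpCone (ι := ι) n) := by
  rintro p ⟨hp1, hp2⟩
  refine mem_extremePoints_iff_left.2
    ⟨subset_convexHull ℝ _ (mem_insert_of_mem _ ⟨hp1, hp2.le⟩), ?_⟩
  rintro x hx y hy ⟨a, b, ha, hb, hab, rfl⟩
  obtain ⟨hx1, hx2⟩ := lpCone_subset_setOf hx
  obtain ⟨hy1, hy2⟩ := lpCone_subset_setOf hy
  have hfst : a * x.1 + b * y.1 = 1 := by simpa using hp1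
  have hx1 : x.1 = 1 := by nlinarith
  have hy1 : y.1 = 1 := by nlinarith
  obtain rfl : x = y := by
    refine Prod.ext (hx1.trans hy1.symm) (not_not.1 fun hxy => ?_)
    exact (lpNorm_smul_add_smul_lt_one hn (hx1 ▸ hx2) (hy1 ▸ hy2) hxy ha hb hab).ne hp2
  rw [← add_smul, hab, one_smul]

theorem extremePoints_lpCone_subset [Nonempty ι] :
    extremePoints ℝ (lpCone n) ⊆ insert (0 : ℝ × EuclideanSpace ℝ ι) (baseSphere n) := by
  intro p hp
  obtain rfl | ⟨hp1, hp2⟩ := extremePoints_convexHull_subset hp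
  · exact mem_insert _ _
  refine mem_insert_of_mem _ ⟨hp1, hp2.eq_of_not_lt fun hlt => ?_⟩
  classical
  obtain ⟨i⟩ := ‹Nonempty ι›
  set e := EuclideanSpace.single i (1 : ℝ)
  set δ := 1 - lpNorm n p.2
  have hδ : 0 < δ := sub_pos.2 hlt
  have hmem (s : ℝ) (hs : |s| = δ) : ((1 : ℝ), p.2 + s • e) ∈ lpCone n := by
    refine subset_convexHull ℝ _ (mem_insert_of_mem _ ⟨rfl, (lpNorm_add_le _ _).trans ?_⟩)
    rw [lpNorm_smul, lpNorm_single, hs]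
    simp [δ]
  have hseg : p ∈ openSegment ℝ ((1 : ℝ), p.2 + δ • e) ((1 : ℝ), p.2 + (-δ) • e) := by
    refine ⟨1 / 2, 1 / 2, by norm_num, by norm_num, by norm_num, Prod.ext ?_ ?_⟩
    · norm_num [hp1]
    · simp only [Prod.snd_add, Prod.smul_snd]; module
  have hfix := (mem_extremePoints_iff_left.1 hp).2 _ (hmem δ (abs_of_pos hδ)) _
    (hmem (-δ) (by rw [abs_neg, abs_of_pos hδ])) hseg
  have : δ • e = 0 := by simpa using congrArg Prod.snd hfix
  simp [hδ.ne', e] at this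

theorem extremePoints_lpCone [Nonempty ι] (hn : 2 ≤ n) :
    extremePoints ℝ (lpCone n) = insert (0 : ℝ × EuclideanSpace ℝ ι) (baseSphere n) :=
  extremePoints_lpCone_subset.antisymm
    (insert_subset zero_mem_extremePoints_lpCone (baseSphere_subset_extremePoints_lpCone hn))

theorem AffineMap.apply_eq_of_forall_baseSphere_ne [Nontrivial ι] {F : Type*} [AddCommGroup F]
    [Module ℝ F]
    (g : (ℝ × EuclideanSpace ℝ ι) →ᵃ[ℝ] F) {c : F} {q : ℝ × EuclideanSpace ℝ ι}
    (hq : q ∈ baseSphere n) (hg : ∀ x ∈ baseSphere n, x ≠ q → g x = c) : g q = c := by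
  have hline (x y : ℝ × EuclideanSpace ℝ ι) (t : ℝ) (hx : g x = c) (hy : g y = c) :
      g (AffineMap.lineMap x y t) = c := by
    rw [AffineMap.apply_lineMap, hx, hy, AffineMap.lineMap_same_apply]
  obtain ⟨u, hu, huq, hunq⟩ := exists_lpNorm_eq_one_ne (n := n) q.2
  have hq0 : -q.2 ≠ q.2 := by
    intro h
    have : (2 : ℝ) • q.2 = 0 := by rw [two_smul]; nth_rw 1 [← h]; exact neg_add_cancel _
    simpa [(smul_eq_zero.1 this).resolve_left two_ne_zero, lpNorm_eq_zero.2] using hq.2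
  have hcenter : g (1, 0) = c := by
    have : ((1 : ℝ), (0 : EuclideanSpace ℝ ι)) =
        AffineMap.lineMap (1, u) (1, -u) (1 / 2 : ℝ) := by
      rw [AffineMap.lineMap_apply_module]
      refine Prod.ext ?_ ?_
      · norm_num
      · simp only [Prod.snd_add, Prod.smul_snd]; module
    rw [this]
    exact hline _ _ _ (hg _ ⟨rfl, hu⟩ fun h => huq (congrArg Prod.snd h))
      (hg _ ⟨rfl, (lpNorm_neg u).trans hu⟩
        fun h => hunq (neg_eq_iff_eq_neg.1 (congrArg Prod.snd h)))
  have hrefl : g (1, -q.2) = c :=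
    hg _ ⟨rfl, (lpNorm_neg _).trans hq.2⟩ fun h => hq0 (congrArg Prod.snd h)
  have : q = AffineMap.lineMap (1, -q.2) (1, 0) (2 : ℝ) := by
    rw [AffineMap.lineMap_apply_module]
    refine Prod.ext ?_ ?_
    · norm_num [hq.1]
    · simp only [Prod.snd_add, Prod.smul_snd]; module
  rw [this]
  exact hline _ _ _ hrefl hcenter

theorem two_smul_sub_mem_baseSphere {p : ℝ × EuclideanSpace ℝ ι} (hp : p ∈ baseSphere n) :
    (2 : ℝ) • ((1 : ℝ), (0 : EuclideanSpace ℝ ι)) - p ∈ baseSphere n := by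
  obtain ⟨hp1, hp2⟩ := hp
  refine ⟨?_, ?_⟩
  · norm_num [hp1]
  · simpa [lpNorm_neg] using hp2

theorem eq_one_zero_of_forall_two_smul_sub_mem [Nonempty ι] {c : ℝ × EuclideanSpace ℝ ι}
    (hc : ∀ x ∈ baseSphere n, (2 : ℝ) • c - x ∈ baseSphere n) : c = (1, 0) := by
  classical
  obtain ⟨i⟩ := ‹Nonempty ι›
  have hc1 : c.1 = 1 := by
    have := (hc (1, EuclideanSpace.single i 1) ⟨rfl, lpNorm_single i⟩).1
    norm_num at this
    linarith
  refine Prod.ext hc1 (not_not.1 fun hw => ?_)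
  set r := lpNorm n c.2
  have hr : 0 < r := (lpNorm_nonneg _).lt_of_ne' (mt lpNorm_eq_zero.1 hw)
  set u := r⁻¹ • c.2
  have hu : lpNorm n u = 1 := lpNorm_inv_smul_self hw
  have hcu : c.2 = r • u := by simp [u, smul_smul, mul_inv_cancel₀ hr.ne']
  have hsnd : ((2 : ℝ) • c - (1, -u)).2 = (2 * r + 1) • u := by
    simp only [Prod.snd_sub, Prod.smul_snd, sub_neg_eq_add]
    rw [hcu]; module
  have := (hc (1, -u) ⟨rfl, (lpNorm_neg u).trans hu⟩).2
  rw [hsnd, lpNorm_smul, hu, mul_one, abs_of_pos (by positivity)] at this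
  linarith

theorem LinearMap.eq_fst_of_forall_baseSphere [Nonempty ι]
    (ψ : (ℝ × EuclideanSpace ℝ ι) →ₗ[ℝ] ℝ) (hψ : ∀ x ∈ baseSphere n, ψ x = 1)
    (p : ℝ × EuclideanSpace ℝ ι) : ψ p = p.1 := by
  classical
  obtain ⟨i⟩ := ‹Nonempty ι›
  set e := EuclideanSpace.single i (1 : ℝ)
  have hcenter : ψ (1, 0) = 1 := by
    have : ((1 : ℝ), (0 : EuclideanSpace ℝ ι)) =
        (1 / 2 : ℝ) • (((1 : ℝ), e) + (1, -e)) := by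
      refine Prod.ext ?_ ?_
      · norm_num
      · simp
    rw [this, map_smul, map_add, hψ (1, e) ⟨rfl, lpNorm_single i⟩,
      hψ (1, -e) ⟨rfl, (lpNorm_neg e).trans (lpNorm_single i)⟩]
    norm_num
  have hvert (v : EuclideanSpace ℝ ι) : ψ (0, v) = 0 := by
    obtain rfl | hv := eq_or_ne v 0
    · exact map_zero ψ
    have : ((0 : ℝ), v) = lpNorm n v • (((1 : ℝ), (lpNorm n v)⁻¹ • v) - (1, 0)) := by
      refine Prod.ext ?_ ?_
      · simp
      · simp [smul_smul, mul_inv_cancel₀ (mt lpNorm_eq_zero.1 hv)]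
    rw [this, map_smul, map_sub,
      hψ (1, (lpNorm n v)⁻¹ • v) ⟨rfl, lpNorm_inv_smul_self hv⟩,
      hcenter, sub_self, smul_zero]
  calc ψ p = ψ (p.1 • ((1 : ℝ), (0 : EuclideanSpace ℝ ι)) + (0, p.2)) := by
        congr 1; ext <;> simp
    _ = p.1 := by rw [map_add, map_smul, hcenter, hvert]; simp

theorem AffineEquiv.map_zero_of_image_lpCone [Nontrivial ι] (hn : 2 ≤ n)
    (T : (ℝ × EuclideanSpace ℝ ι) ≃ᵃ[ℝ] (ℝ × EuclideanSpace ℝ ι))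
    (hT : T '' lpCone n = lpCone n) :
    T 0 = 0 := by
  have hext : T '' extremePoints ℝ (lpCone n) = extremePoints ℝ (lpCone n) := by
    rw [T.image_extremePoints, hT]
  have hext' : T.symm '' extremePoints ℝ (lpCone n) = extremePoints ℝ (lpCone n) := by
    conv_lhs => rw [← hext]
    simp [image_image]
  rw [extremePoints_lpCone hn] at hext hext'
  by_contra h
  have hq : T 0 ∈ baseSphere n :=
    (hext ▸ mem_image_of_mem T (mem_insert _ _) : T 0 ∈ insert 0 (baseSphere n)).resolve_left h
  have key := (AffineMap.fst.comp T.symm.toAffineMap).apply_eq_of_forall_baseSphere_ne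
    (c := (1 : ℝ)) hq fun x hx hxq => ?_
  · simp at key
  · have hx' : T.symm x ∈ insert 0 (baseSphere n) :=
      hext' ▸ mem_image_of_mem _ (mem_insert_of_mem 0 hx)
    have hne : T.symm x ≠ 0 := fun h' => hxq (by rw [← h', T.apply_symm_apply])
    exact (hx'.resolve_left hne).1

theorem AffineEquiv.image_baseSphere_of_image_lpCone [Nonempty ι] (hn : 2 ≤ n)
    (T : (ℝ × EuclideanSpace ℝ ι) ≃ᵃ[ℝ] (ℝ × EuclideanSpace ℝ ι))
    (hT : T '' lpCone n = lpCone n) (h0 : T 0 = 0) : T '' baseSphere n = baseSphere n := by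
  have h0S : (0 : ℝ × EuclideanSpace ℝ ι) ∉ baseSphere n := fun h => zero_ne_one h.1
  rw [← insert_sdiff_self_of_notMem h0S, ← extremePoints_lpCone hn, image_sdiff T.injective,
    image_singleton, h0, T.image_extremePoints, hT]

theorem LinearEquiv.fst_apply_of_image_baseSphere [Nonempty ι]
    (L : (ℝ × EuclideanSpace ℝ ι) ≃ₗ[ℝ] (ℝ × EuclideanSpace ℝ ι))
    (hL : L '' baseSphere n = baseSphere n) (p : ℝ × EuclideanSpace ℝ ι) : (L p).1 = p.1 :=
  (LinearMap.fst ℝ ℝ _ ∘ₗ L.toLinearMap).eq_fst_of_forall_baseSphere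
    (fun x hx => (hL ▸ mem_image_of_mem L hx : L x ∈ baseSphere n).1) p

theorem LinearEquiv.map_axis_of_image_baseSphere [Nonempty ι]
    (L : (ℝ × EuclideanSpace ℝ ι) ≃ₗ[ℝ] (ℝ × EuclideanSpace ℝ ι))
    (hL : L '' baseSphere n = baseSphere n) (t : ℝ) : L (t, 0) = (t, 0) := by
  have h1 : L (1, 0) = (1, 0) := by
    refine eq_one_zero_of_forall_two_smul_sub_mem (n := n) fun x hx => ?_
    rw [← hL] at hx ⊢
    obtain ⟨y, hy, rfl⟩ := hx
    exact ⟨_, two_smul_sub_mem_baseSphere hy, by rw [map_sub, map_smul]⟩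
  have ht : ((t : ℝ), (0 : EuclideanSpace ℝ ι)) = t • ((1 : ℝ), 0) := by simp
  rw [ht, map_smul, h1]

end Cone

instance fact_one_le_natCast_succ (k : ℕ) : Fact (1 ≤ ((k + 1 : ℕ) : ℝ≥0∞)) :=
  ⟨by simp⟩

theorem coneK_eq_lpCone (d k : ℕ) : coneK d k = lpCone (k + 1) := by
  simp only [coneK, lpCone, baseBall, singleton_union,
    sum_abs_pow_le_one_iff (n := k + 1) k.succ_ne_zero]
  rfl

/-- every invertible affine symmetry `T` of the cone `K_k` fixes the apex,
maps `{1} × ∂B_{k+1}^{d-1}` to itself, preserves the first coordinate, and fixes every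
point of the axis intersected with `K_k`. -/
theorem stmt_8 (d k : ℕ) (hd : 3 ≤ d) (hk : 1 ≤ k)
    (T : (ℝ × EuclideanSpace ℝ (Fin (d - 1))) ≃ᵃ[ℝ] (ℝ × EuclideanSpace ℝ (Fin (d - 1))))
    (hT : T '' coneK d k = coneK d k) :
    T (0, 0) = (0, 0) ∧
      T '' {p : ℝ × EuclideanSpace ℝ (Fin (d - 1)) |
            p.1 = 1 ∧ ∑ i, |p.2 i| ^ (k + 1) = 1} =
          {p : ℝ × EuclideanSpace ℝ (Fin (d - 1)) |
            p.1 = 1 ∧ ∑ i, |p.2 i| ^ (k + 1) = 1} ∧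
      (∀ p : ℝ × EuclideanSpace ℝ (Fin (d - 1)), (T p).1 = p.1) ∧
      ∀ t : ℝ, ((t, 0) : ℝ × EuclideanSpace ℝ (Fin (d - 1))) ∈ coneK d k →
        T (t, 0) = (t, 0) := by
  have : Nontrivial (Fin (d - 1)) := Fin.nontrivial_iff_two_le.2 (by omega)
  have hn : 2 ≤ k + 1 := by omega
  simp only [coneK_eq_lpCone, sum_abs_pow_eq_one_iff (n := k + 1) k.succ_ne_zero] at hT ⊢
  have h0 : T 0 = 0 := T.map_zero_of_image_lpCone hn hT
  have hS := T.image_baseSphere_of_image_lpCone hn hT h0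
  have hlin : ⇑T = T.linear := by
    ext1 p
    simpa [h0] using congrFun T.toAffineMap.decomp p
  rw [hlin] at hS ⊢
  exact ⟨hlin ▸ h0, hS, T.linear.fst_apply_of_image_baseSphere hS,
    fun t _ => T.linear.map_axis_of_image_baseSphere hS t⟩
end

section
/- Let ε_d be the unique positive solution of √(1−1/d)(1−(d+1)ε²) = (d−1−1/d)ε. Then there exist t_1, t_2 > 0 such that, with v_i^± = ±√(1−ε_d²)e_i − ε_d e_1 and w_i^± = ±(1/√d)e_i + √(1−1/d)e_1 (2 ≤ i ≤ d+1), one has t_1 Σ v_i^±(v_i^±)^T + t_2 Σ w_i^±(w_i^±)^T = Id_{d+1} and t_1 Σ v_i^± + t_2 Σ w_i^± = 0. -/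
noncomputable def vPt (d : ℕ) (ε : ℝ) (i : Fin d) : Fin (d + 1) → ℝ := fun j =>
  (if j = i.succ then Real.sqrt (1 - ε ^ 2) else 0) + (if j = 0 then -ε else 0)

noncomputable def vMt (d : ℕ) (ε : ℝ) (i : Fin d) : Fin (d + 1) → ℝ := fun j =>
  (if j = i.succ then -Real.sqrt (1 - ε ^ 2) else 0) + (if j = 0 then -ε else 0)

noncomputable def wPt (d : ℕ) (i : Fin d) : Fin (d + 1) → ℝ := fun j =>
  (if j = i.succ then 1 / Real.sqrt d else 0) +
    (if j = 0 then Real.sqrt (1 - 1 / (d : ℝ)) else 0)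

noncomputable def wMt (d : ℕ) (i : Fin d) : Fin (d + 1) → ℝ := fun j =>
  (if j = i.succ then -(1 / Real.sqrt d) else 0) +
    (if j = 0 then Real.sqrt (1 - 1 / (d : ℝ)) else 0)

/-! Both families are symmetric under `e_i ↦ -e_i`, so their sums of outer products are diagonal,
with one entry at `e₁` and a common entry elsewhere, and their sums of points are multiples of `e₁`.
This leaves three scalar equations in `(t₁, t₂)`: the barycenter forces
`(t₁, t₂) ∝ (√(1 - 1/d), ε)`, the `e₁e₁ᵀ` entry fixes the scale, and the remaining entry then
holds exactly because `ε` solves the quadratic. -/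

open Matrix

/-- `b • e_{i+1} + c • e₀`, i.e. the paper's `b e_{i+2} + c e₁`: its `e₁` is coordinate `0` here. -/
def axisPoint {R : Type*} [Ring R] (d : ℕ) (b c : R) (i : Fin d) : Fin (d + 1) → R := fun j =>
  (if j = i.succ then b else 0) + (if j = 0 then c else 0)

section axisPoint

variable {R : Type*} [CommRing R] {d : ℕ}

@[simp] theorem axisPoint_zero (b c : R) (i : Fin d) : axisPoint d b c i 0 = c := by
  simp [axisPoint, (Fin.succ_ne_zero i).symm]

@[simp] theorem axisPoint_succ (b c : R) (i j : Fin d) :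
    axisPoint d b c i j.succ = if j = i then b else 0 := by
  simp [axisPoint, Fin.succ_ne_zero]

theorem sum_axisPoint_add_neg (b c : R) :
    ∑ i : Fin d, (axisPoint d b c i + axisPoint d (-b) c i) = Pi.single 0 (2 * d * c) := by
  ext j
  cases j using Fin.cases <;>
    simp [Finset.sum_apply, Fin.succ_ne_zero, ite_add_ite, two_mul, add_mul]

theorem sum_vecMulVec_axisPoint_add_neg (b c : R) :
    ∑ i : Fin d, (vecMulVec (axisPoint d b c i) (axisPoint d b c i) +
      vecMulVec (axisPoint d (-b) c i) (axisPoint d (-b) c i)) =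
      diagonal (Fin.cons (2 * d * c ^ 2) fun _ => 2 * b ^ 2) := by
  ext j k
  cases j using Fin.cases <;> cases k using Fin.cases <;>
    simp [Matrix.sum_apply, vecMulVec_apply, diagonal_apply, Fin.succ_ne_zero,
      (Fin.succ_ne_zero _).symm, ite_add_ite, neg_ite, two_mul, add_mul, sq]

end axisPoint

theorem vPt_eq (d : ℕ) (ε : ℝ) : vPt d ε = axisPoint d (√(1 - ε ^ 2)) (-ε) := rfl

theorem vMt_eq (d : ℕ) (ε : ℝ) : vMt d ε = axisPoint d (-√(1 - ε ^ 2)) (-ε) := rfl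

theorem wPt_eq (d : ℕ) : wPt d = axisPoint d (1 / √d) (√(1 - 1 / d)) := rfl

theorem wMt_eq (d : ℕ) : wMt d = axisPoint d (-(1 / √d)) (√(1 - 1 / d)) := rfl

theorem exists_john_weights {d ε s : ℝ} (hd : 0 < d) (hε : 0 < ε) (hs : 0 < s)
    (hs2 : s ^ 2 = 1 - 1 / d) (hεeq : s * (1 - (d + 1) * ε ^ 2) = (d - 1 - 1 / d) * ε) :
    ∃ t₁ t₂ : ℝ, 0 < t₁ ∧ 0 < t₂ ∧ 2 * d * (t₁ * ε ^ 2 + t₂ * s ^ 2) = 1 ∧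
      2 * (t₁ * (1 - ε ^ 2) + t₂ / d) = 1 ∧ t₁ * ε = t₂ * s := by
  have hE : 0 < 2 * d * (s * ε ^ 2 + ε * s ^ 2) := by positivity
  refine ⟨s / _, ε / _, div_pos hs hE, div_pos hε hE, ?_, ?_, by ring⟩
  · field_simp
  · have hds : d * s ^ 2 = d - 1 := by rw [hs2]; field_simp
    have hεeq' : d * s * (1 - (d + 1) * ε ^ 2) = (d ^ 2 - d - 1) * ε := by
      field_simp at hεeq; linear_combination hεeq
    field_simp
    linear_combination hεeq' - d * ε * hds

theorem sq_le_one_of_sqrt_mul_eq {d ε : ℝ} (hd : 2 ≤ d) (hε : 0 < ε)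
    (hεeq : √(1 - 1 / d) * (1 - (d + 1) * ε ^ 2) = (d - 1 - 1 / d) * ε) : ε ^ 2 ≤ 1 := by
  have hcoef : 0 < d - 1 - 1 / d := by
    have : 1 / d ≤ 1 / 2 := one_div_le_one_div_of_le two_pos hd
    linarith
  have := pos_of_mul_pos_right (hεeq ▸ mul_pos hcoef hε) (Real.sqrt_nonneg _)
  nlinarith

/-- with `ε` the positive solution of the quadratic equation, there exist
weights `t₁, t₂ > 0` realizing John's decomposition of the identity with barycenter 0. -/
theorem stmt_14 (d : ℕ) (hd : 2 ≤ d) (ε : ℝ) (hεpos : 0 < ε)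
    (hεeq : Real.sqrt (1 - 1 / (d : ℝ)) * (1 - ((d : ℝ) + 1) * ε ^ 2) =
      ((d : ℝ) - 1 - 1 / (d : ℝ)) * ε) :
    ∃ t₁ t₂ : ℝ, 0 < t₁ ∧ 0 < t₂ ∧
      t₁ • (∑ i : Fin d, (Matrix.vecMulVec (vPt d ε i) (vPt d ε i) +
            Matrix.vecMulVec (vMt d ε i) (vMt d ε i))) +
        t₂ • (∑ i : Fin d, (Matrix.vecMulVec (wPt d i) (wPt d i) +
            Matrix.vecMulVec (wMt d i) (wMt d i))) =
          (1 : Matrix (Fin (d + 1)) (Fin (d + 1)) ℝ) ∧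
      t₁ • (∑ i : Fin d, (vPt d ε i + vMt d ε i)) +
        t₂ • (∑ i : Fin d, (wPt d i + wMt d i)) = (0 : Fin (d + 1) → ℝ) := by
  have hd2 : (2 : ℝ) ≤ d := by exact_mod_cast hd
  have hd0 : (0 : ℝ) < d := by linarith
  have h1d : 0 < 1 - 1 / (d : ℝ) := by rw [sub_pos, div_lt_one hd0]; linarith
  have hε1 : 0 ≤ 1 - ε ^ 2 := sub_nonneg.2 (sq_le_one_of_sqrt_mul_eq hd2 hεpos hεeq)
  obtain ⟨t₁, t₂, ht₁, ht₂, h_apex, h_side, h_bary⟩ :=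
    exists_john_weights hd0 hεpos (Real.sqrt_pos.2 h1d) (Real.sq_sqrt h1d.le) hεeq
  refine ⟨t₁, t₂, ht₁, ht₂, ?_, ?_⟩
  · rw [vPt_eq, vMt_eq, wPt_eq, wMt_eq, sum_vecMulVec_axisPoint_add_neg,
      sum_vecMulVec_axisPoint_add_neg, ← diagonal_smul, ← diagonal_smul, diagonal_add,
      ← diagonal_one]
    congr 1
    funext j
    cases j using Fin.cases
    · simp only [Pi.smul_apply, Fin.cons_zero, smul_eq_mul]
      linear_combination h_apex
    · simp only [Pi.smul_apply, Fin.cons_succ, smul_eq_mul, div_pow, Real.sq_sqrt hε1,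
        Real.sq_sqrt hd0.le]
      linear_combination h_side
  · rw [vPt_eq, vMt_eq, wPt_eq, wMt_eq, sum_axisPoint_add_neg, sum_axisPoint_add_neg,
      ← Pi.single_smul, ← Pi.single_smul, ← Pi.single_add, ← Pi.single_zero]
    congr 1
    simp only [smul_eq_mul]
    linear_combination -2 * d * h_bary
end
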